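/- (First variation formula) Let L : I × ℝ⁴ → ℝ satisfy hypotheses (H1)–(H3), let y,h ∈ 𝒴¹, and set g(t,ε) := L{y+εh}(t) for ε ∈ (−ε̄, ε̄) for some ε̄ > 0. Assume: (i) g(t,·) is differentiable at 0 uniformly in t ∈ [a,b]_{q,ω}; (ii) ∫_{ω₀}^a g(t,ε) d_{q,ω}t and ∫_{ω₀}^b g(t,ε) d_{q,ω}t exist for all ε in a neighborhood of 0; (iii) ∫_{ω₀}^a ∂₂g(t,0) d_{q,ω}t and ∫_{ω₀}^b ∂₂g(t,0) d_{q,ω}t exist. Then the function ε ↦ ℒ[y+εh] is differentiable at 0 and its derivative at 0 equals ∫_a^b ( ∂₂L{y}(t)·h(qt+ω) + ∂₃L{y}(t)·D_{q,ω}[h](t) + ∂₄L{y}(t)·h(a) + ∂₅L{y}(t)·h(b) ) d_{q,ω}t. -/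

import Mathlib

noncomputable section

namespace Hahn

/-- The fixed point `ω₀ = ω/(1-q)` of `t ↦ qt+ω`. -/
def omega0 (q ω : ℝ) : ℝ := ω / (1 - q)

/-- The Hahn difference operator of `f` (viewed as a function on the interval `I`):
for `t ≠ ω₀` it is `(f(qt+ω) - f(t))/((q-1)t+ω)`, and at `ω₀` it is the derivative of `f`
at `ω₀` (within `I`). -/
def hahnD (q ω : ℝ) (I : Set ℝ) (f : ℝ → ℝ) (t : ℝ) : ℝ :=
  if t = omega0 q ω then derivWithin f I t
  else (f (q * t + ω) - f t) / ((q - 1) * t + ω)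

/-- `f` is `q,ω`-differentiable on `I`: the only nontrivial requirement is
differentiability at `ω₀` (for `t ≠ ω₀` the Hahn quotient always exists). -/
def HahnDiffOn (q ω : ℝ) (I : Set ℝ) (f : ℝ → ℝ) : Prop :=
  DifferentiableWithinAt ℝ f I (omega0 q ω)

/-- The `q`-bracket `[k]_q = (1-q^k)/(1-q)`. -/
def qnum (q : ℝ) (k : ℕ) : ℝ := (1 - q ^ k) / (1 - q)

/-- The `k`-th term of the Jackson–Nörlund series of `f` at `x`. -/
def jnTerm (q ω : ℝ) (f : ℝ → ℝ) (x : ℝ) (k : ℕ) : ℝ :=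
  q ^ k * f (q ^ k * x + ω * qnum q k)

/-- The Jackson–Nörlund series of `f` converges at `x`. -/
def JNSummable (q ω : ℝ) (f : ℝ → ℝ) (x : ℝ) : Prop :=
  Summable (jnTerm q ω f x)

/-- The Jackson–Nörlund integral `∫_{ω₀}^x f(t) d_{q,ω}t`. -/
def jnInt0 (q ω : ℝ) (f : ℝ → ℝ) (x : ℝ) : ℝ :=
  (x * (1 - q) - ω) * ∑' k : ℕ, jnTerm q ω f x k

/-- The Jackson–Nörlund integral `∫_a^b f(t) d_{q,ω}t`. -/
def jnInt (q ω : ℝ) (f : ℝ → ℝ) (a b : ℝ) : ℝ :=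
  jnInt0 q ω f b - jnInt0 q ω f a

/-- `f` is `q,ω`-integrable on `[a,b]`. -/
def JNIntegrable (q ω : ℝ) (f : ℝ → ℝ) (a b : ℝ) : Prop :=
  JNSummable q ω f a ∧ JNSummable q ω f b

/-- The set `[s]_{q,ω} = {q^n s + ω[n]_q : n ∈ ℕ} ∪ {ω₀}`. -/
def qwOrbit (q ω s : ℝ) : Set ℝ :=
  {x | ∃ n : ℕ, x = q ^ n * s + ω * qnum q n} ∪ {omega0 q ω}

/-- The `q,ω`-interval `[a,b]_{q,ω}`. -/
def qwInterval (q ω a b : ℝ) : Set ℝ :=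
  qwOrbit q ω a ∪ qwOrbit q ω b

/-- The class `𝒴⁰`: functions bounded on `[a,b]` and continuous at `ω₀`. -/
def Y0 (q ω : ℝ) (I : Set ℝ) (a b : ℝ) (y : ℝ → ℝ) : Prop :=
  (∃ M : ℝ, ∀ t ∈ Set.Icc a b, |y t| ≤ M) ∧ ContinuousWithinAt y I (omega0 q ω)

/-- The class `𝒴¹`: `y` is `q,ω`-differentiable, and `y`, `D_{q,ω}[y]` are bounded on
`[a,b]` and continuous at `ω₀`. -/
def Y1 (q ω : ℝ) (I : Set ℝ) (a b : ℝ) (y : ℝ → ℝ) : Prop :=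
  HahnDiffOn q ω I y ∧
  (∃ M : ℝ, ∀ t ∈ Set.Icc a b, |y t| ≤ M) ∧
  (∃ M : ℝ, ∀ t ∈ Set.Icc a b, |hahnD q ω I y t| ≤ M) ∧
  ContinuousWithinAt y I (omega0 q ω) ∧
  ContinuousWithinAt (hahnD q ω I y) I (omega0 q ω)

/-- The norm `‖y‖_{1,∞} = sup_{[a,b]}|y| + sup_{[a,b]}|D_{q,ω}[y]|`. -/
def norm1 (q ω : ℝ) (I : Set ℝ) (a b : ℝ) (y : ℝ → ℝ) : ℝ :=
  sSup ((fun t => |y t|) '' Set.Icc a b) +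
    sSup ((fun t => |hahnD q ω I y t|) '' Set.Icc a b)

/-- `∂₂L`: partial derivative of a Lagrangian `L(t,u₁,u₂,u₃,u₄)` in its 2nd argument. -/
def P2 (L : ℝ → ℝ → ℝ → ℝ → ℝ → ℝ) (t u1 u2 u3 u4 : ℝ) : ℝ :=
  deriv (fun u => L t u u2 u3 u4) u1

/-- `∂₃L`. -/
def P3 (L : ℝ → ℝ → ℝ → ℝ → ℝ → ℝ) (t u1 u2 u3 u4 : ℝ) : ℝ :=
  deriv (fun u => L t u1 u u3 u4) u2

/-- `∂₄L`. -/
def P4 (L : ℝ → ℝ → ℝ → ℝ → ℝ → ℝ) (t u1 u2 u3 u4 : ℝ) : ℝ :=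
  deriv (fun u => L t u1 u2 u u4) u3

/-- `∂₅L`. -/
def P5 (L : ℝ → ℝ → ℝ → ℝ → ℝ → ℝ) (t u1 u2 u3 u4 : ℝ) : ℝ :=
  deriv (fun u => L t u1 u2 u3 u) u4

/-- `L{y}(t) = L(t, y(qt+ω), D_{q,ω}[y](t), y(a), y(b))`. -/
def Lc (q ω : ℝ) (I : Set ℝ) (a b : ℝ) (L : ℝ → ℝ → ℝ → ℝ → ℝ → ℝ)
    (y : ℝ → ℝ) (t : ℝ) : ℝ :=
  L t (y (q * t + ω)) (hahnD q ω I y t) (y a) (y b)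

/-- `∂₂L{y}(t)`. -/
def P2c (q ω : ℝ) (I : Set ℝ) (a b : ℝ) (L : ℝ → ℝ → ℝ → ℝ → ℝ → ℝ)
    (y : ℝ → ℝ) (t : ℝ) : ℝ :=
  P2 L t (y (q * t + ω)) (hahnD q ω I y t) (y a) (y b)

/-- `∂₃L{y}(t)`. -/
def P3c (q ω : ℝ) (I : Set ℝ) (a b : ℝ) (L : ℝ → ℝ → ℝ → ℝ → ℝ → ℝ)
    (y : ℝ → ℝ) (t : ℝ) : ℝ :=
  P3 L t (y (q * t + ω)) (hahnD q ω I y t) (y a) (y b)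

/-- `∂₄L{y}(t)`. -/
def P4c (q ω : ℝ) (I : Set ℝ) (a b : ℝ) (L : ℝ → ℝ → ℝ → ℝ → ℝ → ℝ)
    (y : ℝ → ℝ) (t : ℝ) : ℝ :=
  P4 L t (y (q * t + ω)) (hahnD q ω I y t) (y a) (y b)

/-- `∂₅L{y}(t)`. -/
def P5c (q ω : ℝ) (I : Set ℝ) (a b : ℝ) (L : ℝ → ℝ → ℝ → ℝ → ℝ → ℝ)
    (y : ℝ → ℝ) (t : ℝ) : ℝ :=
  P5 L t (y (q * t + ω)) (hahnD q ω I y t) (y a) (y b)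

/-- The functional `ℒ[y] = ∫_a^b L{y}(t) d_{q,ω}t`. -/
def Lfun (q ω : ℝ) (I : Set ℝ) (a b : ℝ) (L : ℝ → ℝ → ℝ → ℝ → ℝ → ℝ)
    (y : ℝ → ℝ) : ℝ :=
  jnInt q ω (Lc q ω I a b L y) a b

/-- Hypothesis (H1): `(u₁,u₂,u₃,u₄) ↦ L(t,u₁,u₂,u₃,u₄)` is `C¹` for every `t ∈ I`. -/
def H1 (I : Set ℝ) (L : ℝ → ℝ → ℝ → ℝ → ℝ → ℝ) : Prop :=
  ∀ t ∈ I, ContDiff ℝ 1 (fun p : ℝ × ℝ × ℝ × ℝ => L t p.1 p.2.1 p.2.2.1 p.2.2.2)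

/-- Hypothesis (H2): `t ↦ L{y}(t)` is continuous at `ω₀` for every `y ∈ 𝒴¹`. -/
def H2 (q ω : ℝ) (I : Set ℝ) (a b : ℝ) (L : ℝ → ℝ → ℝ → ℝ → ℝ → ℝ) : Prop :=
  ∀ y : ℝ → ℝ, Y1 q ω I a b y → ContinuousWithinAt (Lc q ω I a b L y) I (omega0 q ω)

/-- Hypothesis (H3): `t ↦ ∂_{i+2}L{y}(t)` belongs to `𝒴¹` for `i = 0,1,2,3`. -/
def H3 (q ω : ℝ) (I : Set ℝ) (a b : ℝ) (L : ℝ → ℝ → ℝ → ℝ → ℝ → ℝ) : Prop :=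
  ∀ y : ℝ → ℝ, Y1 q ω I a b y →
    Y1 q ω I a b (P2c q ω I a b L y) ∧ Y1 q ω I a b (P3c q ω I a b L y) ∧
    Y1 q ω I a b (P4c q ω I a b L y) ∧ Y1 q ω I a b (P5c q ω I a b L y)

/-- `g(t,ε) = L{y+εh}(t)`, written out explicitly. -/
def gvar (q ω : ℝ) (I : Set ℝ) (a b : ℝ) (L : ℝ → ℝ → ℝ → ℝ → ℝ → ℝ)
    (y h : ℝ → ℝ) (t e : ℝ) : ℝ :=
  L t (y (q * t + ω) + e * h (q * t + ω)) (hahnD q ω I y t + e * hahnD q ω I h t)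
    (y a + e * h a) (y b + e * h b)

/-- Conditions (i)–(iii) of the first-variation lemma for a fixed pair `y, h`:
(i) `g(t,·)` is differentiable at `0` uniformly in `t ∈ [a,b]_{q,ω}`;
(ii) `∫_{ω₀}^a g(t,ε) d_{q,ω}t` and `∫_{ω₀}^b g(t,ε) d_{q,ω}t` exist for `ε` near `0`;
(iii) `∫_{ω₀}^a ∂₂g(t,0) d_{q,ω}t` and `∫_{ω₀}^b ∂₂g(t,0) d_{q,ω}t` exist. -/
def CondYH (q ω : ℝ) (I : Set ℝ) (a b : ℝ) (L : ℝ → ℝ → ℝ → ℝ → ℝ → ℝ)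
    (y h : ℝ → ℝ) : Prop :=
  ((∀ t ∈ qwInterval q ω a b, DifferentiableAt ℝ (fun e => gvar q ω I a b L y h t e) 0) ∧
    ∀ ep : ℝ, 0 < ep → ∃ δ : ℝ, 0 < δ ∧ ∀ e : ℝ, 0 < |e| → |e| < δ →
      ∀ t ∈ qwInterval q ω a b,
        |(gvar q ω I a b L y h t e - gvar q ω I a b L y h t 0) / e -
          deriv (fun e' => gvar q ω I a b L y h t e') 0| < ep) ∧
  (∃ r : ℝ, 0 < r ∧ ∀ e : ℝ, |e| < r →
    JNSummable q ω (fun t => gvar q ω I a b L y h t e) a ∧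
    JNSummable q ω (fun t => gvar q ω I a b L y h t e) b) ∧
  (JNSummable q ω (fun t => deriv (fun e => gvar q ω I a b L y h t e) 0) a ∧
    JNSummable q ω (fun t => deriv (fun e => gvar q ω I a b L y h t e) 0) b)

/-- Conditions (i)–(iii), quantified over all `y, h ∈ 𝒴¹`. -/
def Cond (q ω : ℝ) (I : Set ℝ) (a b : ℝ) (L : ℝ → ℝ → ℝ → ℝ → ℝ → ℝ) : Prop :=
  ∀ y h : ℝ → ℝ, Y1 q ω I a b y → Y1 q ω I a b h → CondYH q ω I a b L y h

/-- The Hahn quantum Euler–Lagrange equation for `L` along `y`, on `[a,b]_{q,ω}`. -/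
def EulerLagrange (q ω : ℝ) (I : Set ℝ) (a b : ℝ) (L : ℝ → ℝ → ℝ → ℝ → ℝ → ℝ)
    (y : ℝ → ℝ) : Prop :=
  ∀ t ∈ qwInterval q ω a b,
    P2c q ω I a b L y t - hahnD q ω I (fun τ => P3c q ω I a b L y τ) t = 0

/-- Natural boundary condition at `a`. -/
def NBCa (q ω : ℝ) (I : Set ℝ) (a b : ℝ) (L : ℝ → ℝ → ℝ → ℝ → ℝ → ℝ)
    (y : ℝ → ℝ) : Prop :=
  P3c q ω I a b L y a = jnInt q ω (P4c q ω I a b L y) a b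

/-- Natural boundary condition at `b`. -/
def NBCb (q ω : ℝ) (I : Set ℝ) (a b : ℝ) (L : ℝ → ℝ → ℝ → ℝ → ℝ → ℝ)
    (y : ℝ → ℝ) : Prop :=
  P3c q ω I a b L y b = - jnInt q ω (P5c q ω I a b L y) a b

/-!
`ℒ[y + εh]` is a difference of two Jackson–Nörlund series `(x(1-q) - ω) ∑ₖ qᵏ g(tₖ, ε)` over the
orbits `tₖ = qᵏx + ω[k]_q` of `x = a` and `x = b`. Condition (i) says that the difference
quotients of `g(tₖ, ·)` at `0` converge uniformly in `k`; against the summable weights `qᵏ` this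
allows the series to be differentiated termwise. Linearity of `D_{q,ω}` gives
`L{y + εh}(t) = g(t, ε)`, and since the orbits stay in `I`, the chain rule under (H1) identifies
`∂₂g(t, 0)` with the integrand of the first variation.
-/

end Hahn

open Filter Topology

theorem tendstoUniformlyOn_slope_of_forall_abs_lt {ι : Type*} {g : ι → ℝ → ℝ} {d : ι → ℝ}
    {S : Set ι} (h : ∀ ε : ℝ, 0 < ε → ∃ δ : ℝ, 0 < δ ∧ ∀ e : ℝ, 0 < |e| → |e| < δ →
      ∀ i ∈ S, |(g i e - g i 0) / e - d i| < ε) :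
    TendstoUniformlyOn (fun e i => slope (g i) 0 e) d (𝓝[≠] 0) S := by
  refine Metric.tendstoUniformlyOn_iff.2 fun ε hε => ?_
  obtain ⟨δ, hδ, hg⟩ := h ε hε
  refine eventually_nhdsWithin_iff.2 (Metric.eventually_nhds_iff.2 ⟨δ, hδ, fun e he hne i hi => ?_⟩)
  rw [Real.dist_eq, sub_zero] at he
  rw [Real.dist_eq, abs_sub_comm, slope_def_field, sub_zero]
  exact hg e (abs_pos.2 hne) he i hi

theorem hasDerivAt_tsum_mul_of_tendstoUniformly_slope {g : ℕ → ℝ → ℝ} {c d : ℕ → ℝ}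
    (hc : Summable fun k => |c k|)
    (hg : TendstoUniformly (fun e k => slope (g k) 0 e) d (𝓝[≠] 0))
    (hsum : ∀ᶠ e in 𝓝 0, Summable fun k => c k * g k e) (hd : Summable fun k => c k * d k) :
    HasDerivAt (fun e => ∑' k, c k * g k e) (∑' k, c k * d k) 0 := by
  rw [hasDerivAt_iff_tendsto_slope, Metric.tendsto_nhds]
  intro ε hε
  set C := ∑' k, |c k|
  have hC : 0 ≤ C := tsum_nonneg fun k => abs_nonneg _
  have hε' : 0 < ε / (C + 1) := by positivity
  filter_upwards [Metric.tendstoUniformly_iff.1 hg _ hε', nhdsWithin_le_nhds hsum,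
    self_mem_nhdsWithin] with e hge hse (he : e ≠ 0)
  have hs0 : Summable fun k => c k * g k 0 := hsum.self_of_nhds
  have hdiff : slope (fun e => ∑' k, c k * g k e) 0 e - ∑' k, c k * d k =
      ∑' k, c k * (slope (g k) 0 e - d k) := by
    simp only [slope_def_field, sub_zero]
    rw [← hse.tsum_sub hs0, ← tsum_div_const, ← ((hse.sub hs0).div_const e).tsum_sub hd]
    exact tsum_congr fun k => by ring
  have hbound : ∀ k, ‖c k * (slope (g k) 0 e - d k)‖ ≤ |c k| * (ε / (C + 1)) := fun k => by
    rw [Real.norm_eq_abs, abs_mul, abs_sub_comm]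
    exact mul_le_mul_of_nonneg_left (hge k).le (abs_nonneg _)
  calc dist (slope (fun e => ∑' k, c k * g k e) 0 e) (∑' k, c k * d k)
      = ‖∑' k, c k * (slope (g k) 0 e - d k)‖ := by rw [dist_eq_norm, hdiff]
    _ ≤ ∑' k, |c k| * (ε / (C + 1)) :=
      tsum_of_norm_bounded (hc.mul_right _).hasSum hbound
    _ = C * (ε / (C + 1)) := tsum_mul_right
    _ < ε := by
      rw [mul_div_assoc', div_lt_iff₀ (by positivity)]
      nlinarith

namespace Hahn

theorem orbit_mem_of_ordConnected {q ω : ℝ} (hq : 0 ≤ q) (hq1 : q < 1) {I : Set ℝ}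
    (hI : I.OrdConnected) (hmem : omega0 q ω ∈ I) {x : ℝ} (hx : x ∈ I) (k : ℕ) :
    q ^ k * x + ω * qnum q k ∈ I := by
  have hq1' : 1 - q ≠ 0 := by linarith
  have hconv : q ^ k * x + ω * qnum q k = q ^ k • x + (1 - q ^ k) • omega0 q ω := by
    simp only [qnum, omega0, smul_eq_mul]
    field_simp
  rw [hconv]
  exact hI.convex hx hmem (by positivity) (by linarith [pow_le_one₀ hq hq1.le (n := k)])
    (by ring)

theorem qwInterval_subset_of_ordConnected {q ω : ℝ} (hq : 0 ≤ q) (hq1 : q < 1) {I : Set ℝ}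
    (hI : I.OrdConnected) (hmem : omega0 q ω ∈ I) {a b : ℝ} (ha : a ∈ I) (hb : b ∈ I) :
    qwInterval q ω a b ⊆ I := by
  have horbit : ∀ x ∈ I, qwOrbit q ω x ⊆ I := by
    rintro x hx t (⟨k, rfl⟩ | rfl)
    exacts [orbit_mem_of_ordConnected hq hq1 hI hmem hx k, hmem]
  exact Set.union_subset (horbit a ha) (horbit b hb)

theorem jnInt0_congr {q ω : ℝ} {f g : ℝ → ℝ} {x : ℝ} (hfg : Set.EqOn f g (qwOrbit q ω x)) :
    jnInt0 q ω f x = jnInt0 q ω g x := by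
  unfold jnInt0 jnTerm
  rw [tsum_congr fun k => by rw [hfg (Or.inl ⟨k, rfl⟩)]]

theorem jnInt_congr {q ω : ℝ} {f g : ℝ → ℝ} {a b : ℝ} (hfg : Set.EqOn f g (qwInterval q ω a b)) :
    jnInt q ω f a b = jnInt q ω g a b := by
  unfold jnInt
  rw [jnInt0_congr (hfg.mono Set.subset_union_left),
    jnInt0_congr (hfg.mono Set.subset_union_right)]

theorem hasDerivAt_jnInt0 {q ω : ℝ} (hq : |q| < 1) {g : ℝ → ℝ → ℝ} {d : ℝ → ℝ}
    {x : ℝ} (hg : TendstoUniformlyOn (fun e t => slope (g t) 0 e) d (𝓝[≠] 0) (qwOrbit q ω x))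
    (hsum : ∀ᶠ e in 𝓝 0, JNSummable q ω (fun t => g t e) x) (hd : JNSummable q ω d x) :
    HasDerivAt (fun e => jnInt0 q ω (fun t => g t e) x) (jnInt0 q ω d x) 0 := by
  set t : ℕ → ℝ := fun k => q ^ k * x + ω * qnum q k
  have hgt : TendstoUniformly (fun e k => slope (g (t k)) 0 e) (d ∘ t) (𝓝[≠] 0) := by
    have hpre : t ⁻¹' qwOrbit q ω x = Set.univ := Set.eq_univ_of_forall fun k => Or.inl ⟨k, rfl⟩
    have := hg.comp t
    rwa [hpre, tendstoUniformlyOn_univ] at this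
  exact (hasDerivAt_tsum_mul_of_tendstoUniformly_slope
    (summable_geometric_of_abs_lt_one hq).abs hgt hsum hd).const_mul _

theorem hasDerivAt_jnInt {q ω : ℝ} (hq : |q| < 1) {g : ℝ → ℝ → ℝ} {d : ℝ → ℝ}
    {a b : ℝ}
    (hg : TendstoUniformlyOn (fun e t => slope (g t) 0 e) d (𝓝[≠] 0) (qwInterval q ω a b))
    (hsum : ∀ᶠ e in 𝓝 0, JNIntegrable q ω (fun t => g t e) a b) (hd : JNIntegrable q ω d a b) :
    HasDerivAt (fun e => jnInt q ω (fun t => g t e) a b) (jnInt q ω d a b) 0 :=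
  (hasDerivAt_jnInt0 hq (hg.mono Set.subset_union_right) (hsum.mono fun _ h => h.2) hd.2).sub
    (hasDerivAt_jnInt0 hq (hg.mono Set.subset_union_left) (hsum.mono fun _ h => h.1) hd.1)

theorem hahnD_add_mul {q ω : ℝ} {I : Set ℝ} {y h : ℝ → ℝ} (hy : HahnDiffOn q ω I y)
    (hh : HahnDiffOn q ω I h) (e t : ℝ) :
    hahnD q ω I (fun s => y s + e * h s) t = hahnD q ω I y t + e * hahnD q ω I h t := by
  unfold hahnD
  split_ifs with ht
  · subst ht
    exact (derivWithin_fun_add hy (hh.const_mul e)).trans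
      (congrArg _ (derivWithin_const_mul e hh))
  · ring

theorem Lfun_add_mul {q ω : ℝ} {I : Set ℝ} {a b : ℝ} (L : ℝ → ℝ → ℝ → ℝ → ℝ → ℝ)
    {y h : ℝ → ℝ} (hy : HahnDiffOn q ω I y) (hh : HahnDiffOn q ω I h) (e : ℝ) :
    Lfun q ω I a b L (fun t => y t + e * h t) =
      jnInt q ω (fun t => gvar q ω I a b L y h t e) a b := by
  unfold Lfun
  congr 1
  funext t
  rw [Lc, gvar, hahnD_add_mul hy hh]

theorem hasDerivAt_add_mul_of_contDiff {L : ℝ → ℝ → ℝ → ℝ → ℝ → ℝ} {t : ℝ}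
    (hL : ContDiff ℝ 1 (fun p : ℝ × ℝ × ℝ × ℝ => L t p.1 p.2.1 p.2.2.1 p.2.2.2))
    (u₁ u₂ u₃ u₄ v₁ v₂ v₃ v₄ : ℝ) :
    HasDerivAt (fun e => L t (u₁ + e * v₁) (u₂ + e * v₂) (u₃ + e * v₃) (u₄ + e * v₄))
      (P2 L t u₁ u₂ u₃ u₄ * v₁ + P3 L t u₁ u₂ u₃ u₄ * v₂ +
        P4 L t u₁ u₂ u₃ u₄ * v₃ + P5 L t u₁ u₂ u₃ u₄ * v₄) 0 := by
  set G : ℝ × ℝ × ℝ × ℝ → ℝ := fun p => L t p.1 p.2.1 p.2.2.1 p.2.2.2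
  set p : ℝ × ℝ × ℝ × ℝ := (u₁, u₂, u₃, u₄)
  have hG : HasFDerivAt G (fderiv ℝ G p) p := (hL.differentiable one_ne_zero p).hasFDerivAt
  have hpartial : ∀ (c : ℝ → ℝ × ℝ × ℝ × ℝ) (c' : ℝ × ℝ × ℝ × ℝ) (s : ℝ), HasDerivAt c c' s →
      c s = p → deriv (G ∘ c) s = fderiv ℝ G p c' :=
    fun c c' s hc hcs => (hG.comp_hasDerivAt_of_eq s hc hcs.symm).deriv
  have h₂ : P2 L t u₁ u₂ u₃ u₄ = fderiv ℝ G p (1, 0, 0, 0) :=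
    hpartial (fun u => (u, u₂, u₃, u₄)) _ u₁
      ((hasDerivAt_id u₁).prodMk (hasDerivAt_const _ _)) rfl
  have h₃ : P3 L t u₁ u₂ u₃ u₄ = fderiv ℝ G p (0, 1, 0, 0) :=
    hpartial (fun u => (u₁, u, u₃, u₄)) _ u₂
      ((hasDerivAt_const _ _).prodMk ((hasDerivAt_id u₂).prodMk (hasDerivAt_const _ _))) rfl
  have h₄ : P4 L t u₁ u₂ u₃ u₄ = fderiv ℝ G p (0, 0, 1, 0) :=
    hpartial (fun u => (u₁, u₂, u, u₄)) _ u₃ ((hasDerivAt_const _ _).prodMk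
      ((hasDerivAt_const _ _).prodMk ((hasDerivAt_id u₃).prodMk (hasDerivAt_const _ _)))) rfl
  have h₅ : P5 L t u₁ u₂ u₃ u₄ = fderiv ℝ G p (0, 0, 0, 1) :=
    hpartial (fun u => (u₁, u₂, u₃, u)) _ u₄ ((hasDerivAt_const _ _).prodMk
      ((hasDerivAt_const _ _).prodMk ((hasDerivAt_const _ _).prodMk (hasDerivAt_id u₄)))) rfl
  set v : ℝ × ℝ × ℝ × ℝ := (v₁, v₂, v₃, v₄)
  have hline : HasDerivAt (fun e : ℝ => p + e • v) v 0 := by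
    simpa using ((hasDerivAt_id (0 : ℝ)).smul_const v).const_add p
  have hv : v = v₁ • (1, 0, 0, 0) + v₂ • (0, 1, 0, 0) + v₃ • (0, 0, 1, 0) + v₄ • (0, 0, 0, 1) := by
    simp [v]
  refine (hG.comp_hasDerivAt_of_eq 0 hline (by simp)).congr_deriv ?_
  rw [hv]
  simp only [map_add, map_smul, smul_eq_mul, h₂, h₃, h₄, h₅]
  ring

theorem hasDerivAt_gvar {q ω : ℝ} {I : Set ℝ} {a b : ℝ} {L : ℝ → ℝ → ℝ → ℝ → ℝ → ℝ}
    (hL : H1 I L) (y h : ℝ → ℝ) {t : ℝ} (ht : t ∈ I) :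
    HasDerivAt (gvar q ω I a b L y h t)
      (P2c q ω I a b L y t * h (q * t + ω) + P3c q ω I a b L y t * hahnD q ω I h t +
        P4c q ω I a b L y t * h a + P5c q ω I a b L y t * h b) 0 :=
  hasDerivAt_add_mul_of_contDiff (hL t ht) _ _ _ _ _ _ _ _

theorem first_variation_general
    (q ω : ℝ) (hq : 0 < q) (hq1 : q < 1)
    (I : Set ℝ) (hI : I.OrdConnected) (hmem : omega0 q ω ∈ I)
    (a b : ℝ) (ha : a ∈ I) (hb : b ∈ I)
    (L : ℝ → ℝ → ℝ → ℝ → ℝ → ℝ)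
    (hH1 : H1 I L)
    (y h : ℝ → ℝ) (hy : Y1 q ω I a b y) (hh : Y1 q ω I a b h)
    (hcond : CondYH q ω I a b L y h) :
    HasDerivAt (fun e : ℝ => Lfun q ω I a b L (fun t => y t + e * h t))
      (jnInt q ω (fun t =>
        P2c q ω I a b L y t * h (q * t + ω) +
        P3c q ω I a b L y t * hahnD q ω I h t +
        P4c q ω I a b L y t * h a +
        P5c q ω I a b L y t * h b) a b) 0 := by
  obtain ⟨⟨-, hunif⟩, ⟨r, hr, hsum⟩, hsumd⟩ := hcond
  simp only [Lfun_add_mul L hy.1 hh.1]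
  have hsum_near : ∀ᶠ e in 𝓝 0, JNIntegrable q ω (fun t => gvar q ω I a b L y h t e) a b :=
    Metric.eventually_nhds_iff.2
      ⟨r, hr, fun e he => hsum e (by rwa [Real.dist_eq, sub_zero] at he)⟩
  have hqI : qwInterval q ω a b ⊆ I := qwInterval_subset_of_ordConnected hq.le hq1 hI hmem ha hb
  refine (hasDerivAt_jnInt (abs_lt.2 ⟨by linarith, hq1⟩)
    (tendstoUniformlyOn_slope_of_forall_abs_lt hunif) hsum_near hsumd).congr_deriv
    (jnInt_congr fun t ht => ?_)
  exact (hasDerivAt_gvar hH1 y h (hqI ht)).deriv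

/-- first variation formula. -/
theorem first_variation
    (q ω : ℝ) (hq : 0 < q) (hq1 : q < 1) (hω : 0 ≤ ω)
    (I : Set ℝ) (hI : I.OrdConnected) (hmem : omega0 q ω ∈ I)
    (a b : ℝ) (ha : a ∈ I) (hb : b ∈ I) (hab : a < b)
    (L : ℝ → ℝ → ℝ → ℝ → ℝ → ℝ)
    (hH1 : H1 I L) (hH2 : H2 q ω I a b L) (hH3 : H3 q ω I a b L)
    (y h : ℝ → ℝ) (hy : Y1 q ω I a b y) (hh : Y1 q ω I a b h)
    (hcond : CondYH q ω I a b L y h) :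
    HasDerivAt (fun e : ℝ => Lfun q ω I a b L (fun t => y t + e * h t))
      (jnInt q ω (fun t =>
        P2c q ω I a b L y t * h (q * t + ω) +
        P3c q ω I a b L y t * hahnD q ω I h t +
        P4c q ω I a b L y t * h a +
        P5c q ω I a b L y t * h b) a b) 0 :=
  first_variation_general q ω hq hq1 I hI hmem a b ha hb L hH1 y h hy hh hcond

end Hahn
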